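/- Define f₋(δ₀) = (1 - 6δ₀ + 8δ₀² - 8δ₀³ + 4δ₀⁴ - √(1 - 8δ₀ + 16δ₀² - 48δ₀³ + 120δ₀⁴ - 160δ₀⁵ + 128δ₀⁶ - 64δ₀⁷ + 16δ₀⁸))/(2(δ₀ - 1)) for δ₀ > 1. Then f₋(δ₀) < -1 for all δ₀ > 1, and f₋(δ₀) → -1 as δ₀ → ∞. -/

import Mathlib

/-! With `s = 4δ⁴ - 8δ³ + 8δ² - 4δ - 1`, the radicand is `s² + 16δ(δ - 1)` and the numerator is
`s - 2(δ - 1)`, so rationalising gives `f₋(δ) + 1 = -8δ / (s + √(s² + 16δ(δ - 1)))`.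
For `δ > 1` the denominator is positive, whence `f₋ < -1`; for `δ ≥ 2` it is at least `δ²`,
whence `f₋ + 1 = O(1/δ)`. -/

open Filter

noncomputable def fMinusP (δ₀ : ℝ) : ℝ :=
  (1 - 6 * δ₀ + 8 * δ₀ ^ 2 - 8 * δ₀ ^ 3 + 4 * δ₀ ^ 4 -
    Real.sqrt (1 - 8 * δ₀ + 16 * δ₀ ^ 2 - 48 * δ₀ ^ 3 + 120 * δ₀ ^ 4
      - 160 * δ₀ ^ 5 + 128 * δ₀ ^ 6 - 64 * δ₀ ^ 7 + 16 * δ₀ ^ 8)) /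
  (2 * (δ₀ - 1))

theorem add_sqrt_sq_add_pos (s : ℝ) {t : ℝ} (ht : 0 < t) : 0 < s + √(s ^ 2 + t) := by
  have : |s| < √(s ^ 2 + t) := by
    rw [← Real.sqrt_sq_eq_abs]
    exact Real.sqrt_lt_sqrt (sq_nonneg s) (by linarith)
  linarith [neg_abs_le s]

theorem sub_sqrt_sq_add (s : ℝ) {t : ℝ} (ht : 0 < t) :
    s - √(s ^ 2 + t) = -t / (s + √(s ^ 2 + t)) := by
  rw [eq_div_iff (add_sqrt_sq_add_pos s ht).ne']
  linear_combination -Real.sq_sqrt (by positivity : 0 ≤ s ^ 2 + t)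

noncomputable def fMinusPShiftedNum (δ : ℝ) : ℝ := 4 * δ ^ 4 - 8 * δ ^ 3 + 8 * δ ^ 2 - 4 * δ - 1

noncomputable def fMinusPDen (δ : ℝ) : ℝ :=
  fMinusPShiftedNum δ + √(fMinusPShiftedNum δ ^ 2 + 16 * δ * (δ - 1))

theorem fMinusPDen_pos {δ : ℝ} (hδ : 1 < δ) : 0 < fMinusPDen δ :=
  add_sqrt_sq_add_pos _ (by nlinarith)

theorem sq_le_fMinusPDen {δ : ℝ} (hδ : 2 ≤ δ) : δ ^ 2 ≤ fMinusPDen δ := by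
  have hcubic : 0 ≤ 4 * δ ^ 3 * (δ - 2) := mul_nonneg (by positivity) (by linarith)
  have hnum : δ ^ 2 ≤ fMinusPShiftedNum δ := by unfold fMinusPShiftedNum; nlinarith
  exact hnum.trans (le_add_of_nonneg_right (Real.sqrt_nonneg _))

theorem fMinusP_eq_neg_one_sub {δ : ℝ} (hδ : 1 < δ) :
    fMinusP δ = -1 - 8 * δ / fMinusPDen δ := by
  set s := fMinusPShiftedNum δ with hs
  have hδ1 : δ - 1 ≠ 0 := sub_ne_zero.mpr hδ.ne'
  have hrad : 1 - 8 * δ + 16 * δ ^ 2 - 48 * δ ^ 3 + 120 * δ ^ 4 - 160 * δ ^ 5 + 128 * δ ^ 6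
      - 64 * δ ^ 7 + 16 * δ ^ 8 = s ^ 2 + 16 * δ * (δ - 1) := by
    rw [hs, fMinusPShiftedNum]; ring
  calc fMinusP δ = -1 + (s - √(s ^ 2 + 16 * δ * (δ - 1))) / (2 * (δ - 1)) := by
        rw [fMinusP, hrad, hs, fMinusPShiftedNum]; field_simp; ring
    _ = -1 + -(16 * δ * (δ - 1)) / fMinusPDen δ / (2 * (δ - 1)) := by
        rw [sub_sqrt_sq_add s (by nlinarith), fMinusPDen]
    _ = -1 - 8 * δ / fMinusPDen δ := by field_simp; ring

theorem tendsto_div_fMinusPDen_atTop :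
    Tendsto (fun δ => 8 * δ / fMinusPDen δ) atTop (nhds 0) := by
  have h8 : Tendsto (fun δ : ℝ => 8 / δ) atTop (nhds 0) :=
    tendsto_const_nhds.div_atTop tendsto_id
  refine squeeze_zero' ?_ ?_ h8
  · filter_upwards [eventually_gt_atTop 1] with δ hδ
    exact div_nonneg (by linarith) (fMinusPDen_pos hδ).le
  · filter_upwards [eventually_ge_atTop 2] with δ hδ
    calc 8 * δ / fMinusPDen δ ≤ 8 * δ / δ ^ 2 :=
          div_le_div_of_nonneg_left (by linarith) (by positivity) (sq_le_fMinusPDen hδ)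
      _ = 8 / δ := by field_simp

theorem stmt_8 :
    (∀ δ₀ : ℝ, 1 < δ₀ → fMinusP δ₀ < -1) ∧
    Tendsto fMinusP atTop (nhds (-1)) := by
  refine ⟨fun δ hδ => ?_, ?_⟩
  · rw [fMinusP_eq_neg_one_sub hδ]
    linarith [div_pos (by linarith : 0 < 8 * δ) (fMinusPDen_pos hδ)]
  · have hlim := (tendsto_const_nhds (x := (-1 : ℝ))).sub tendsto_div_fMinusPDen_atTop
    rw [sub_zero] at hlim
    refine hlim.congr' ?_
    filter_upwards [eventually_gt_atTop 1] with δ hδ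
    exact (fMinusP_eq_neg_one_sub hδ).symm
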